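/- Let n ≥ 2 and T ≥ 1 be integers, q ∈ [0, 1], and let μ be the product measure on Fin T → Bool in which each coordinate is an independent Bernoulli(q) random bit. In the lower-bound chain with n states, let the trajectory S_0, …, S_T from state 1 be driven by the T random bits. Then for every integer j with 2 ≤ j ≤ n, μ({x : ∃ t ≤ T, S_t(x) ≥ j}) ≤ T · q^{j−1}. -/

import Mathlib

open MeasureTheory

/-- The deterministic trajectory in the lower-bound chain with states `{1, …, n}`:
from state `s`, action `true` moves right (capped at `n`), action `false` resets to `1`. -/
def traj (n : ℕ) (a : ℕ → Bool) (s : ℕ) : ℕ → ℕ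
  | 0 => s
  | t + 1 => if a t then min (traj n a s t + 1) n else 1

/-!
To stand in a state `≥ m + 1` at time `t`, the walk started at `1` must have taken `m` forward
steps in a row just before `t`, i.e. the actions at times `t - m, …, t - 1` are all `true`.
Under independent `Bernoulli(q)` bits each such window has probability `q ^ m`, and a union
bound over the at most `T` possible end times `t ∈ [m, T]` gives `T * q ^ m`.
-/

open Finset

theorem traj_le_add (n : ℕ) (a : ℕ → Bool) (s : ℕ) : ∀ t, traj n a s t ≤ s + t
  | 0 => le_rfl
  | t + 1 => by
    have := traj_le_add n a s t
    unfold traj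
    split <;> omega

theorem apply_eq_true_of_add_one_le_traj (n : ℕ) (a : ℕ → Bool) (s : ℕ) :
    ∀ m t, m + 1 ≤ traj n a s t → ∀ i ∈ Ico (t - m) t, a i = true
  | _, 0, _, i, hi => by simp at hi
  | 0, _ + 1, _, i, hi => by simp at hi
  | m + 1, t + 1, h, i, hi => by
    unfold traj at h
    split at h
    case isTrue hat =>
      rcases Nat.lt_succ_iff_lt_or_eq.mp (mem_Ico.mp hi).2 with hit | rfl
      · exact apply_eq_true_of_add_one_le_traj n a s m t (by omega) i
          (by simp at hi ⊢; omega)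
      · exact hat
    case isFalse => omega

theorem MeasureTheory.Measure.pi_setOf_forall_mem_eq {ι α : Type*} [Fintype ι]
    [MeasurableSpace α] (ν : Measure α) [IsProbabilityMeasure ν] (s : Finset ι) (a : α) :
    Measure.pi (fun _ : ι => ν) {x | ∀ i ∈ s, x i = a} = ν {a} ^ #s := by
  have : {x : ι → α | ∀ i ∈ s, x i = a} = (s : Set ι).pi fun _ => {a} := by ext; simp
  rw [this, Measure.pi_pi_finset, prod_const]

def trueWindow (T m t : ℕ) : Set (Fin T → Bool) :=
  {x | ∀ i : Fin T, (i : ℕ) ∈ Ico (t - m) t → x i = true}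

theorem MeasureTheory.Measure.pi_trueWindow {T m t : ℕ} (hmt : m ≤ t) (htT : t ≤ T)
    (ν : Measure Bool) [IsProbabilityMeasure ν] :
    Measure.pi (fun _ : Fin T => ν) (trueWindow T m t) = ν {true} ^ m := by
  have hlt : ∀ k ∈ Ico (t - m) t, k < T := fun k hk => by simp at hk; omega
  have := Measure.pi_setOf_forall_mem_eq ν ((Ico (t - m) t).attachFin hlt) true
  simp only [mem_attachFin, card_attachFin, Nat.card_Ico] at this
  rwa [Nat.sub_sub_self hmt] at this

theorem PMF.bernoulli_toMeasure_singleton_true (p : NNReal) (h : p ≤ 1) :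
    (PMF.bernoulli p h).toMeasure {true} = p := by
  rw [PMF.toMeasure_apply_singleton _ _ (measurableSet_singleton _), PMF.bernoulli_apply]
  rfl

theorem setOf_exists_add_one_le_traj_subset (n T m : ℕ) :
    {x : Fin T → Bool | ∃ t ≤ T,
        m + 1 ≤ traj n (fun s => if h : s < T then x ⟨s, h⟩ else false) 1 t}
      ⊆ ⋃ t ∈ Icc m T, trueWindow T m t := by
  rintro x ⟨t, htT, ht⟩
  have hmt : m ≤ t := by have := ht.trans (traj_le_add _ _ _ _); omega
  refine Set.mem_biUnion (mem_Icc.mpr ⟨hmt, htT⟩) fun i hi => ?_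
  simpa using apply_eq_true_of_add_one_le_traj n _ 1 m t ht i hi

theorem hitting_prob_le_general (n T : ℕ)
    (q : ℝ) (hq0 : 0 ≤ q) (hq1 : q ≤ 1) (j : ℕ) (hj2 : 2 ≤ j) :
    ((Measure.pi fun _ : Fin T =>
        (PMF.bernoulli (Real.toNNReal q) (Real.toNNReal_le_one.mpr hq1)).toMeasure)
      {x : Fin T → Bool | ∃ t ≤ T,
        j ≤ traj n (fun s => if h : s < T then x ⟨s, h⟩ else false) 1 t}).toReal
      ≤ T * q ^ (j - 1) := by
  set μ := Measure.pi fun _ : Fin T =>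
    (PMF.bernoulli (Real.toNNReal q) (Real.toNNReal_le_one.mpr hq1)).toMeasure
  obtain ⟨m, rfl⟩ : ∃ m, j = m + 1 := ⟨j - 1, by omega⟩
  have hwindow : ∀ t ∈ Icc m T, μ.real (trueWindow T m t) = q ^ m := fun t ht => by
    rw [measureReal_def, Measure.pi_trueWindow (mem_Icc.mp ht).1 (mem_Icc.mp ht).2,
      PMF.bernoulli_toMeasure_singleton_true]
    simp [hq0]
  calc _ ≤ ∑ t ∈ Icc m T, μ.real (trueWindow T m t) :=
        (measureReal_mono (setOf_exists_add_one_le_traj_subset n T m)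
          (measure_ne_top _ _)).trans (measureReal_biUnion_finset_le _ _)
    _ = #(Icc m T) * q ^ m := by rw [sum_congr rfl hwindow, sum_const, nsmul_eq_mul]
    _ ≤ T * q ^ (m + 1 - 1) := by
      rw [Nat.add_sub_cancel, Nat.card_Icc]
      gcongr
      exact_mod_cast (by omega : T + 1 - m ≤ T)

/-- hitting-time bound. Under `T` independent `Bernoulli(q)` bits, the
trajectory of the chain with `n` states started from state `1` reaches a state `≥ j` within
`T` steps with probability at most `T * q^(j-1)`. -/
theorem hitting_prob_le (n T : ℕ) (hn : 2 ≤ n) (hT : 1 ≤ T)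
    (q : ℝ) (hq0 : 0 ≤ q) (hq1 : q ≤ 1) (j : ℕ) (hj2 : 2 ≤ j) (hjn : j ≤ n) :
    ((Measure.pi fun _ : Fin T =>
        (PMF.bernoulli (Real.toNNReal q) (Real.toNNReal_le_one.mpr hq1)).toMeasure)
      {x : Fin T → Bool | ∃ t ≤ T,
        j ≤ traj n (fun s => if h : s < T then x ⟨s, h⟩ else false) 1 t}).toReal
      ≤ T * q ^ (j - 1) :=
  hitting_prob_le_general n T q hq0 hq1 j hj2
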